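/- arXiv:2202.03502 — 6 statements merged into one kernel-verified Lean document; each statement's English description precedes it below -/
import Mathlib

section
/- Let Ω be a diagonal (N+1)×(N+1) real matrix with positive diagonal entries, and let A be an (N+1)×(N+1) real matrix with A·𝟏 = 0 satisfying the compressibility constraint Ω_ii A_ij + A_ji Ω_jj = 2 Ω_ii A_ii δ_ij for all 1 ≤ i,j ≤ N+1. Define (div A)_i = 2A_ii and A^∂_i = −2A_{i,N+1}. Then ∑_{i=1}^N Ω_ii (div A)_i = ∑_{i=1}^N Ω_ii A^∂_i. -/
open Matrix Finset

/-- Discrete divergence theorem with boundary: for an `(N+1)×(N+1)` matrix `A`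
with `A·𝟏 = 0` satisfying the compressibility constraint, with boundary cell
`∂ = N+1` (the last index), `∑_{i=1}^N Ω_ii (div A)_i = ∑_{i=1}^N Ω_ii A^∂_i`
where `(div A)_i = 2A_ii` and `A^∂_i = −2 A_{i,∂}`. -/
theorem integral_discrete_divergence_general (N : ℕ)
    (ω : Fin (N + 1) → ℝ) (hω : ∀ i, 0 < ω i)
    (A : Matrix (Fin (N + 1)) (Fin (N + 1)) ℝ)
    (hA1 : A *ᵥ (fun _ => (1 : ℝ)) = 0)
    (hcomp : ∀ i j, ω i * A i j + A j i * ω j =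
      2 * ω i * A i i * (if i = j then 1 else 0)) :
    ∑ i : Fin N, ω i.castSucc * (2 * A i.castSucc i.castSucc) =
      ∑ i : Fin N, ω i.castSucc * (-2 * A i.castSucc (Fin.last N)) := by
  have hrow : ∀ i : Fin (N + 1), ∑ j : Fin (N + 1), A i j = 0 := by
    intro i
    have := congrFun hA1 i
    simpa [Matrix.mulVec, dotProduct] using this
  have key : ∀ i : Fin N, ∑ j : Fin N, A i.castSucc j.castSucc
      = - A i.castSucc (Fin.last N) := by
    intro i
    have h := hrow i.castSucc
    rw [Fin.sum_univ_castSucc] at h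
    linarith
  set T : ℝ := ∑ i : Fin N, ∑ j : Fin N, ω i.castSucc * A i.castSucc j.castSucc with hTdef
  have hT1 : T = ∑ i : Fin N, ω i.castSucc * A i.castSucc i.castSucc := by
    have hsum : ∑ i : Fin N, ∑ j : Fin N,
        (ω i.castSucc * A i.castSucc j.castSucc
          + A j.castSucc i.castSucc * ω j.castSucc)
        = ∑ i : Fin N, ∑ j : Fin N,
          2 * ω i.castSucc * A i.castSucc i.castSucc
            * (if i.castSucc = j.castSucc then 1 else 0) := by
      simp only [hcomp]
    have hL : ∑ i : Fin N, ∑ j : Fin N,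
        (ω i.castSucc * A i.castSucc j.castSucc
          + A j.castSucc i.castSucc * ω j.castSucc) = T + T := by
      rw [hTdef]
      simp only [Finset.sum_add_distrib]
      congr 1
      rw [Finset.sum_comm]
      simp [mul_comm]
    have hR : ∑ i : Fin N, ∑ j : Fin N,
        2 * ω i.castSucc * A i.castSucc i.castSucc
          * (if i.castSucc = j.castSucc then 1 else 0)
        = 2 * ∑ i : Fin N, ω i.castSucc * A i.castSucc i.castSucc := by
      simp only [Fin.castSucc_inj, mul_ite, mul_one, mul_zero]
      rw [Finset.mul_sum]
      refine Finset.sum_congr rfl fun i _ => ?_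
      rw [Finset.sum_ite_eq]
      simp [mul_assoc]
    rw [hL, hR] at hsum
    linarith
  have hT2 : T = ∑ i : Fin N, ω i.castSucc * (- A i.castSucc (Fin.last N)) := by
    rw [hTdef]
    refine Finset.sum_congr rfl fun i _ => ?_
    rw [← Finset.mul_sum, key i]
  have := hT1.symm.trans hT2
  calc ∑ i : Fin N, ω i.castSucc * (2 * A i.castSucc i.castSucc)
      = 2 * ∑ i : Fin N, ω i.castSucc * A i.castSucc i.castSucc := by
        rw [Finset.mul_sum]; refine Finset.sum_congr rfl fun i _ => by ring
    _ = 2 * ∑ i : Fin N, ω i.castSucc * (- A i.castSucc (Fin.last N)) := by rw [this]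
    _ = ∑ i : Fin N, ω i.castSucc * (-2 * A i.castSucc (Fin.last N)) := by
        rw [Finset.mul_sum]; refine Finset.sum_congr rfl fun i _ => by ring
end

section
/- Let Ω be a diagonal N×N matrix with positive diagonal entries, and equip gl(N,ℝ) with the pairing ⟪L,B⟫ = Tr(LᵀΩB). Let 𝔡 = {A : A·𝟏 = 0}. For L ∈ gl(N,ℝ) define Q(L) = L − L̂, where L̂_ij = L_ii for all j. Then ⟪L,B⟫ = 0 for all B ∈ 𝔡 if and only if Q(L) = 0, i.e., if and only if every row of L is constant. -/
open Matrix Finset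

/-- Annihilator of the Lie algebra of discrete vector fields: with pairing
`⟪L,B⟫ = ∑_{ij} Ω_ii L_ij B_ij`, one has `⟪L,B⟫ = 0` for all `B` with
`B·𝟏 = 0` if and only if `Q(L) = L − L̂ = 0`, i.e. every row of `L` is
constant (`L_ij = L_ii` for all `i, j`). -/
theorem discrete_momenta_annihilator_Q (N : ℕ)
    (ω : Fin N → ℝ) (hω : ∀ i, 0 < ω i)
    (L : Matrix (Fin N) (Fin N) ℝ) :
    (∀ B : Matrix (Fin N) (Fin N) ℝ, B *ᵥ (fun _ => (1 : ℝ)) = 0 →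
      ∑ i, ∑ j, ω i * L i j * B i j = 0) ↔ (∀ i j, L i j = L i i) := by
  constructor
  · intro h i j
    by_cases hij : j = i
    · rw [hij]
    · have hji : ¬ (i = j) := fun h => hij h.symm
      set B : Matrix (Fin N) (Fin N) ℝ :=
        fun a b => if a = i then (if b = j then 1 else if b = i then -1 else 0) else 0 with hB
      have hrow : B *ᵥ (fun _ => (1 : ℝ)) = 0 := by
        funext a
        simp only [mulVec, dotProduct, mul_one, hB, Pi.zero_apply]
        by_cases ha : a = i
        · rw [Finset.sum_eq_add_of_mem j i (mem_univ j) (mem_univ i) hij]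
          · rw [if_pos ha, if_pos ha, if_pos rfl, if_neg hji, if_pos rfl]; ring
          · intro c _ hc
            rw [if_pos ha, if_neg hc.1, if_neg hc.2]
        · simp [ha]
      have hpair := h B hrow
      have hsum : ∑ a, ∑ b, ω a * L a b * B a b
          = ω i * L i j - ω i * L i i := by
        rw [Finset.sum_eq_single i]
        · rw [Finset.sum_eq_add_of_mem j i (mem_univ j) (mem_univ i) hij]
          · simp only [hB, if_true, eq_self_iff_true, if_neg hji, if_neg hij]
            ring
          · intro c _ hc
            simp [hB, hc.1, hc.2]
        · intro a _ ha
          simp [hB, ha]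
        · simp
      rw [hsum] at hpair
      have hω' := (hω i).ne'
      have h2 : ω i * (L i j - L i i) = 0 := by linarith
      have := (mul_eq_zero.mp h2).resolve_left hω'
      linarith
  · intro h B hB
    have hr : ∀ a, ∑ b, B a b = 0 := by
      intro a
      have := congrFun hB a
      simpa [mulVec, dotProduct] using this
    calc ∑ a, ∑ b, ω a * L a b * B a b
        = ∑ a, ω a * L a a * ∑ b, B a b := by
          apply Finset.sum_congr rfl
          intro a _
          rw [Finset.mul_sum]
          exact Finset.sum_congr rfl fun b _ => by rw [h a b]
      _ = 0 := by simp [hr]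
end

section
/- Let Ω be a diagonal N×N matrix with positive diagonal entries, and equip gl(N,ℝ) with the pairing ⟪L,B⟫ = Tr(LᵀΩB). Let 𝒱 = {A ∈ gl(N,ℝ) : A·𝟏 = 0 and AᵀΩ + ΩA is diagonal}. For L ∈ gl(N,ℝ), define P(L) = skew(L − L̂), where L̂_ij = L_ii and skew(M) = (M − Mᵀ)/2. Then ⟪L,B⟫ = 0 for all B ∈ 𝒱 if and only if P(L) = 0. -/
open Matrix Finset

/-- Annihilator of the compressibility-constrained discrete vector fields:
with pairing `⟪L,B⟫ = ∑_{ij} Ω_ii L_ij B_ij` and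
`𝒱 = {A : A·𝟏 = 0, AᵀΩ + ΩA diagonal}`, one has `⟪L,B⟫ = 0` for all
`B ∈ 𝒱` if and only if `P(L) = skew(L − L̂) = 0`, i.e.
`(L_ij − L_ji − L_ii + L_jj)/2 = 0` for all `i, j`. -/
theorem discrete_momenta_annihilator_P (N : ℕ)
    (ω : Fin N → ℝ) (hω : ∀ i, 0 < ω i)
    (L : Matrix (Fin N) (Fin N) ℝ) :
    (∀ B : Matrix (Fin N) (Fin N) ℝ,
      B *ᵥ (fun _ => (1 : ℝ)) = 0 →
      (∀ i j, ω i * B i j + B j i * ω j = 2 * ω i * B i i * (if i = j then 1 else 0)) →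
      ∑ i, ∑ j, ω i * L i j * B i j = 0) ↔
    (∀ i j, (L i j - L j i - L i i + L j j) / 2 = 0) := by
  constructor
  · intro h
    intro i j
    by_cases hij : i = j
    · subst hij; ring
    · have hi := (hω i).ne'
      have hj := (hω j).ne'
      set c : Fin N → ℝ := fun a => if a = i then 1 / ω i else if a = j then 1 / ω j else 0 with hc
      set r : Fin N → ℝ := fun b => (if b = j then (1:ℝ) else 0) - (if b = i then 1 else 0) with hr
      have hd : ∀ a, ω a * c a = (if a = i then 1 else 0) + (if a = j then 1 else 0) := by
        intro a
        rw [hc]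
        by_cases hai : a = i
        · subst hai; simp [hij]; field_simp
        · by_cases haj : a = j
          · subst haj; simp [hai]; field_simp
          · simp [hai, haj]
      have key := h (fun a b => c a * r b) ?_ ?_
      · have inner : ∀ a, ∑ b, ω a * L a b * (c a * r b)
            = (ω a * c a) * (L a j - L a i) := by
          intro a
          have e : ∀ b, ω a * L a b * (c a * r b)
              = (if b = j then (ω a * c a) * L a b else 0)
                - (if b = i then (ω a * c a) * L a b else 0) := by
            intro b; simp only [hr]; split_ifs <;> ring
          rw [Finset.sum_congr rfl fun b _ => e b, Finset.sum_sub_distrib]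
          simp [Finset.sum_ite_eq']
          ring
        rw [Finset.sum_congr rfl fun a _ => inner a] at key
        rw [Finset.sum_congr rfl fun a _ => by rw [hd a]] at key
        simp only [add_mul, ite_mul, one_mul, zero_mul, Finset.sum_add_distrib,
          Finset.sum_ite_eq', Finset.mem_univ, if_true] at key
        linarith
      · funext a
        simp [Matrix.mulVec, dotProduct, hr, mul_sub, Finset.sum_sub_distrib,
          Finset.sum_ite_eq']
      · intro a b
        have e1 : ω a * (c a * r b) + c b * r a * ω b
            = (ω a * c a) * r b + (ω b * c b) * r a := by ring
        have e2 : 2 * ω a * (c a * r a) * (if a = b then (1:ℝ) else 0)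
            = 2 * ((ω a * c a) * r a) * (if a = b then 1 else 0) := by ring
        rw [e1, e2, hd a, hd b]
        simp only [hr]
        by_cases hab : a = b
        · subst hab; simp; ring
        · rw [if_neg hab, mul_zero]
          by_cases hai : a = i
          · have haj : ¬ a = j := by rw [hai]; exact hij
            have hbi : ¬ b = i := fun h => hab (by rw [hai, h])
            by_cases hbj : b = j <;> simp [hai, haj, hbi, hbj, hij, Ne.symm hij]
          · by_cases haj : a = j
            · have hbj : ¬ b = j := fun h => hab (by rw [haj, h])
              by_cases hbi : b = i <;> simp [haj, hai, hbi, hbj, hij, Ne.symm hij]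
            · simp [hai, haj]
  · intro hP B hB1 hB2
    have hL : ∀ a b, L a b - L b a = L a a - L b b := fun a b => by
      have := hP a b; linarith
    have hrow : ∀ a, ∑ b, ω a * B a b = 0 := by
      intro a
      have h := congrFun hB1 a
      simp only [Matrix.mulVec, dotProduct, mul_one, Pi.zero_apply] at h
      rw [← Finset.mul_sum, h, mul_zero]
    have hsym : ∀ a b, ω a * B a b + ω b * B b a
        = 2 * (ω a * B a a) * (if a = b then 1 else 0) := by
      intro a b; have := hB2 a b; linarith
    have hcol : ∀ b, ∑ a, ω a * B a b = 2 * (ω b * B b b) := by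
      intro b
      have e : ∀ a, ω a * B a b
          = 2 * (ω a * B a a) * (if a = b then 1 else 0) - ω b * B b a := by
        intro a; linarith [hsym a b]
      rw [Finset.sum_congr rfl fun a _ => e a, Finset.sum_sub_distrib, hrow b, sub_zero]
      simp
    have hA : ∑ a, ∑ b, L a b * (ω a * B a b + ω b * B b a)
        = ∑ a, L a a * (2 * (ω a * B a a)) := by
      refine Finset.sum_congr rfl fun a _ => ?_
      rw [Finset.sum_congr rfl fun b _ => by rw [hsym a b]]
      simp [mul_ite]
    have hC : ∑ a, ∑ b, L a b * (ω a * B a b - ω b * B b a)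
        = - ∑ a, L a a * (2 * (ω a * B a a)) := by
      have e1 : ∑ a, ∑ b, L a b * (ω a * B a b - ω b * B b a)
          = ∑ a, ∑ b, (L a a - L b b) * (ω a * B a b) := by
        simp only [mul_sub, Finset.sum_sub_distrib]
        rw [show (∑ a, ∑ b, L a b * (ω b * B b a))
            = ∑ a, ∑ b, L b a * (ω a * B a b) from Finset.sum_comm]
        rw [← Finset.sum_sub_distrib]
        rw [show (∑ a, ∑ b, (L a a - L b b) * (ω a * B a b))
            = ∑ a, ∑ b, (L a b - L b a) * (ω a * B a b) from
          Finset.sum_congr rfl fun a _ => Finset.sum_congr rfl fun b _ => by rw [hL a b]]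
        refine Finset.sum_congr rfl fun a _ => ?_
        rw [← Finset.sum_sub_distrib]
        exact Finset.sum_congr rfl fun b _ => by ring
      rw [e1]
      simp only [sub_mul, Finset.sum_sub_distrib]
      rw [show (∑ a, ∑ b, L a a * (ω a * B a b)) = 0 from
          Finset.sum_eq_zero fun a _ => by rw [← Finset.mul_sum, hrow, mul_zero]]
      rw [show (∑ a, ∑ b, L b b * (ω a * B a b))
          = ∑ a, L a a * (2 * (ω a * B a a)) from ?_]
      · ring
      · rw [Finset.sum_comm]
        exact Finset.sum_congr rfl fun b _ => by rw [← Finset.mul_sum, hcol]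
    have h2S : 2 * ∑ i, ∑ j, ω i * L i j * B i j = 0 := by
      have e : 2 * ∑ i, ∑ j, ω i * L i j * B i j
          = (∑ a, ∑ b, L a b * (ω a * B a b + ω b * B b a))
            + ∑ a, ∑ b, L a b * (ω a * B a b - ω b * B b a) := by
        rw [← Finset.sum_add_distrib, Finset.mul_sum]
        refine Finset.sum_congr rfl fun a _ => ?_
        rw [← Finset.sum_add_distrib, Finset.mul_sum]
        exact Finset.sum_congr rfl fun b _ => by ring
      rw [e, hA, hC]; ring
    linarith
end

section
/- Let Ω be a diagonal N×N matrix with positive diagonal entries. For any L ∈ gl(N,ℝ) and any A ∈ gl(N,ℝ) with A·𝟏 = 0 and AᵀΩ + ΩA diagonal, one has ⟪L, A⟫ = ⟪P(L), A⟫, where ⟪L,B⟫ = Tr(LᵀΩB), P(L)_ij = (L_ij − L_ji − L_ii + L_jj)/2. -/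
open Matrix Finset

/-- Pairing with a compressibility-constrained discrete vector field only sees
the projection `P(L)`: `⟪L, A⟫ = ⟪P(L), A⟫` where
`P(L)_ij = (L_ij − L_ji − L_ii + L_jj)/2` and `⟪L,B⟫ = ∑_{ij} Ω_ii L_ij B_ij`. -/
theorem discrete_pairing_projection (N : ℕ)
    (ω : Fin N → ℝ) (hω : ∀ i, 0 < ω i)
    (L A : Matrix (Fin N) (Fin N) ℝ)
    (hA1 : A *ᵥ (fun _ => (1 : ℝ)) = 0)
    (hcomp : ∀ i j, ω i * A i j + A j i * ω j =
      2 * ω i * A i i * (if i = j then 1 else 0)) :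
    ∑ i, ∑ j, ω i * L i j * A i j =
      ∑ i, ∑ j, ω i * ((L i j - L j i - L i i + L j j) / 2) * A i j := by
  have hrow : ∀ i, ∑ j, A i j = 0 := by
    intro i
    have := congrFun hA1 i
    simpa [Matrix.mulVec, dotProduct] using this
  set S1 := ∑ i, ∑ j, ω i * L i j * A i j with hS1
  set D := ∑ i, ω i * L i i * A i i with hD
  have hS2 : ∑ i, ∑ j, ω i * L j i * A i j = 2 * D - S1 := by
    rw [Finset.sum_comm]
    have : ∀ a : Fin N, ∑ b, ω b * L a b * A b a
        = 2 * ω a * L a a * A a a - ω a * ∑ b, L a b * A a b := by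
      intro a
      have h1 : ∀ b : Fin N, ω b * L a b * A b a
          = (if b = a then 2 * ω b * L a b * A b b else 0) - ω a * (L a b * A a b) := by
        intro b
        have := hcomp b a
        by_cases h : b = a <;> simp [h] at this ⊢
        · linear_combination L a a * this
        · linear_combination L a b * this
      rw [Finset.sum_congr rfl (fun b _ => h1 b), Finset.sum_sub_distrib,
        Finset.sum_ite_eq' Finset.univ a (fun b => 2 * ω b * L a b * A b b),
        ← Finset.mul_sum]
      simp
    rw [Finset.sum_congr rfl (fun a _ => this a), Finset.sum_sub_distrib]
    have : ∑ a, ω a * ∑ b, L a b * A a b = S1 := by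
      rw [hS1]
      apply Finset.sum_congr rfl
      intro a _
      rw [Finset.mul_sum]
      exact Finset.sum_congr rfl (fun b _ => by ring)
    rw [this, hD, Finset.mul_sum]
    congr 1
    exact Finset.sum_congr rfl (fun a _ => by ring)
  have hS3 : ∑ i, ∑ j, ω i * L i i * A i j = 0 := by
    apply Finset.sum_eq_zero
    intro i _
    rw [← Finset.mul_sum, hrow i, mul_zero]
  have hS4 : ∑ i, ∑ j, ω i * L j j * A i j = 2 * D := by
    rw [Finset.sum_comm]
    have : ∀ j : Fin N, ∑ i, ω i * L j j * A i j = 2 * ω j * L j j * A j j := by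
      intro j
      have h1 : ∀ i : Fin N, ω i * L j j * A i j
          = (if i = j then 2 * ω i * L j j * A i i else 0) - L j j * (A j i * ω j) := by
        intro i
        have := hcomp i j
        by_cases h : i = j <;> simp [h] at this ⊢
        · linear_combination L j j * this
        · linear_combination L j j * this
      rw [Finset.sum_congr rfl (fun i _ => h1 i), Finset.sum_sub_distrib,
        Finset.sum_ite_eq' Finset.univ j (fun i => 2 * ω i * L j j * A i i),
        ← Finset.mul_sum]
      have : ∑ i, A j i * ω j = 0 := by
        rw [← Finset.sum_mul, hrow j, zero_mul]
      simp [this]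
    rw [Finset.sum_congr rfl (fun j _ => this j), hD, Finset.mul_sum]
    exact Finset.sum_congr rfl (fun j _ => by ring)
  have hRHS : ∑ i, ∑ j, ω i * ((L i j - L j i - L i i + L j j) / 2) * A i j
      = (S1 - (∑ i, ∑ j, ω i * L j i * A i j) - (∑ i, ∑ j, ω i * L i i * A i j)
        + (∑ i, ∑ j, ω i * L j j * A i j)) / 2 := by
    rw [hS1]
    rw [← Finset.sum_sub_distrib, ← Finset.sum_sub_distrib, ← Finset.sum_add_distrib,
      Finset.sum_div]
    apply Finset.sum_congr rfl
    intro i _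
    rw [← Finset.sum_sub_distrib, ← Finset.sum_sub_distrib, ← Finset.sum_add_distrib,
      Finset.sum_div]
    exact Finset.sum_congr rfl (fun j _ => by ring)
  rw [hRHS, hS2, hS3, hS4]
  ring
end

section
/- Let Ω be a diagonal N×N matrix with positive diagonal entries and let A ∈ gl(N,ℝ) satisfy A·𝟏 = 0 and the compressibility constraint Ω_ii A_ij + A_ji Ω_jj = 2Ω_ii A_ii δ_ij. For D ∈ ℝᴺ define D•A = Ω⁻¹AᵀΩD. Then for every i ∈ {1,…,N}: (D•A)_i = 2A_ii D_i − ∑_{j=1}^N A_ij D_j, i.e., (D•A)_i = (div A)_i D_i + (D·A)_i, where (div A)_i = 2A_ii and D·A = −AD. -/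
open Matrix Finset

/-- The action of a compressibility-constrained discrete vector field on a
discrete density: `(D•A)_i = (Ω⁻¹AᵀΩD)_i = 2A_ii D_i − ∑_j A_ij D_j`, i.e.
`D•A = (div A) D + D·A` with `(div A)_i = 2A_ii` and `D·A = −AD`. -/
theorem discrete_density_action_formula (N : ℕ)
    (ω : Fin N → ℝ) (hω : ∀ i, 0 < ω i)
    (A : Matrix (Fin N) (Fin N) ℝ)
    (hA1 : A *ᵥ (fun _ => (1 : ℝ)) = 0)
    (hcomp : ∀ i j, ω i * A i j + A j i * ω j =
      2 * ω i * A i i * (if i = j then 1 else 0))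
    (D : Fin N → ℝ) :
    ∀ i, (ω i)⁻¹ * (∑ j, A j i * (ω j * D j)) =
      2 * A i i * D i - ∑ j, A i j * D j := by
  intro i
  have key : ∀ j, A j i * (ω j * D j) =
      ω i * ((2 * A i i * (if i = j then 1 else 0)) * D j - A i j * D j) := by
    intro j
    have h := hcomp i j
    have : A j i * ω j = 2 * ω i * A i i * (if i = j then 1 else 0) - ω i * A i j := by
      linarith
    rw [show A j i * (ω j * D j) = (A j i * ω j) * D j by ring, this]
    ring
  simp only [key]
  rw [← Finset.mul_sum, ← mul_assoc, inv_mul_cancel₀ (hω i).ne', one_mul,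
    Finset.sum_sub_distrib]
  congr 1
  rw [Finset.sum_congr rfl (fun j _ => by rw [mul_ite, mul_one, mul_zero, ite_mul, zero_mul]),
    Finset.sum_ite_eq (Finset.univ : Finset (Fin N)) i (fun j => 2 * A i i * D j)]
  simp
end

section
/- Let F be a skew-symmetric N×N real matrix (a discrete 1-form) and A an N×N real matrix with A·𝟏 = 0. Define the interior products (i_A F)_i = (AFᵀ)_ii for the discrete function i_A F, and (i_A G)_ij = ∑_k (G_ikj A_ik − G_jki A_jk) for a discrete 2-form G (a totally antisymmetric 3-tensor), with discrete exterior derivatives (dH)_ij = H_j − H_i for H ∈ ℝᴺ and (dF)_ijk = F_ij + F_jk + F_ki. Then the discrete Lie derivative L_A F := −(i_A dF + d i_A F) satisfies L_A F = −(AF + FAᵀ). -/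
open Matrix Finset

/-- Discrete Cartan formula: for a skew-symmetric discrete 1-form `F` and a
discrete vector field `A` (`A·𝟏 = 0`), the discrete Lie derivative
`L_A F = −(i_A dF + d i_A F)` equals `−(AF + FAᵀ)` entrywise, where
`(dF)_ijk = F_ij + F_jk + F_ki`, `(i_A G)_ij = ∑_k (G_ikj A_ik − G_jki A_jk)`
for a 2-form `G`, `(i_A F)_i = (AFᵀ)_ii = ∑_k A_ik F_ik`, and
`(dH)_ij = H_j − H_i` for a discrete function `H`. -/
theorem discrete_lie_derivative_one_form (N : ℕ)
    (F A : Matrix (Fin N) (Fin N) ℝ)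
    (hF : Fᵀ = -F)
    (hA1 : A *ᵥ (fun _ => (1 : ℝ)) = 0) :
    ∀ i j,
      -((∑ k, ((F i k + F k j + F j i) * A i k - (F j k + F k i + F i j) * A j k)) +
        ((∑ k, A j k * F j k) - (∑ k, A i k * F i k))) =
      -((A * F) i j + (F * Aᵀ) i j) := by
  intro i j
  have skew : ∀ a b, F b a = -F a b := fun a b => by
    have := congrFun (congrFun hF a) b
    simpa [Matrix.transpose_apply] using this
  have hAi : (∑ k, A i k) = 0 := by
    have := congrFun hA1 i
    simpa [Matrix.mulVec, dotProduct] using this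
  have hAj : (∑ k, A j k) = 0 := by
    have := congrFun hA1 j
    simpa [Matrix.mulVec, dotProduct] using this
  have H : (∑ k, ((F i k + F k j + F j i) * A i k - (F j k + F k i + F i j) * A j k)) +
      ((∑ k, A j k * F j k) - (∑ k, A i k * F i k)) =
      ∑ k, ((A i k * F k j + F i k * A j k) + (F j i * A i k - F i j * A j k)) := by
    rw [← Finset.sum_sub_distrib, ← Finset.sum_add_distrib]
    exact Finset.sum_congr rfl fun k _ => by rw [skew i k]; ring
  rw [H]
  simp only [Finset.sum_add_distrib, Finset.sum_sub_distrib, ← Finset.mul_sum, hAi, hAj,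
    Matrix.mul_apply, Matrix.transpose_apply, mul_zero, add_zero, sub_zero]
end
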